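/- Let (ν_i) be a sequence of strictly aperiodic probability measures on ℤ such that E(ν_i) = 0 for all i, and suppose there exist a constant C > 0 and an integer N₀ > 0 such that |ν̂_n(t)| ≤ e^{−Ct²} for all n > N₀ and all t ∈ [−1/2, 1/2). Let μ_n = ν₁ * … * ν_n. Then there is a constant C' such that for every k ≥ 1, every n with 4^{k−1} ≤ n < 4^k, and every t ∈ [−1/2, 1/2) with t ≠ 0, |μ̂_n(t) − μ̂_{4^{k−1}}(t)| ≤ C' / (4^k t²). -/

import Mathlib

open scoped ENNReal NNReal BigOperators
open MeasureTheory

noncomputable section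

/-- A probability measure on ℤ, viewed as a nonnegative function summing to 1. -/
def IsProbZ (ν : ℤ → ℝ) : Prop := (∀ k, 0 ≤ ν k) ∧ HasSum ν 1

/-- Fourier transform of a measure on ℤ: ν̂(t) = ∑ₖ ν(k) e^{-2πikt}. -/
def fourierZ (ν : ℤ → ℝ) (t : ℝ) : ℂ :=
  ∑' k : ℤ, (ν k : ℂ) * Complex.exp ((-2 * (Real.pi : ℂ) * Complex.I) * (k : ℂ) * (t : ℂ))

/-- p-th moment of a measure on ℤ. -/
def moment (p : ℝ) (ν : ℤ → ℝ) : ℝ := ∑' k : ℤ, |(k : ℝ)| ^ p * ν k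

/-- ν is strictly aperiodic: its support is not contained in any coset of a
proper subgroup of ℤ. -/
def StrictlyAperiodic (ν : ℤ → ℝ) : Prop :=
  ¬ ∃ (H : AddSubgroup ℤ) (a : ℤ), H ≠ ⊤ ∧ ∀ k, ν k ≠ 0 → k - a ∈ H

/-- Convolution of two measures on ℤ. -/
def convZ (ν₁ ν₂ : ℤ → ℝ) : ℤ → ℝ := fun k => ∑' j : ℤ, ν₁ j * ν₂ (k - j)

/-- `convProd ν n = ν 1 * ⋯ * ν n` (convolution product), with `convProd ν 0 = δ₀`. -/
def convProd (ν : ℕ → ℤ → ℝ) : ℕ → ℤ → ℝ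
  | 0 => fun k => if k = 0 then 1 else 0
  | n + 1 => convZ (convProd ν n) (ν (n + 1))

/-- Variation ρ-norm of a sequence of reals over an index set `I ⊆ ℕ`:
the sup over nondecreasing sequences with values in `I` of
`(∑ⱼ |x_{n(j)} - x_{n(j+1)}|^ρ)^{1/ρ}`, valued in `ℝ≥0∞`. -/
def vNorm (ρ : ℝ) (I : Set ℕ) (x : ℕ → ℝ) : ℝ≥0∞ :=
  ⨆ (n : ℕ → ℕ) (_ : Monotone n) (_ : ∀ j, n j ∈ I),
    (∑' j : ℕ, (ENNReal.ofReal |x (n j) - x (n (j + 1))|) ^ ρ) ^ (1 / ρ)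

/-- Oscillation s-norm of a sequence of reals relative to the increasing
sequence `nk` of indices. -/
def oNorm (s : ℝ) (nk : ℕ → ℕ) (x : ℕ → ℝ) : ℝ≥0∞ :=
  (∑' k : ℕ,
    (⨆ (n : ℕ) (_ : nk k ≤ n ∧ n ≤ nk (k + 1)), ENNReal.ofReal |x n - x (nk k)|) ^ s) ^ (1 / s)

/-- Action of a measure on ℤ on a function via a (bi-)measure-preserving map:
`μ f (x) = ∑ⱼ μ(j) f(T^j x)`. -/
def act {X : Type*} (T : Equiv.Perm X) (μ : ℤ → ℝ) (f : X → ℝ) (x : X) : ℝ :=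
  ∑' j : ℤ, μ j * f ((T ^ j) x)

end

/-!
The Fourier transform turns the convolution product `μ n = ν 1 * ⋯ * ν n` into the product
`∏ i < n, ν̂ (i + 1)`. All factors have modulus at most `1`, so for `m ≤ n` one has
`|μ̂ n - μ̂ m| = |μ̂ m| · |ν̂ (m + 1) ⋯ ν̂ n - 1| ≤ 2 |μ̂ m|`, and the Gaussian decay of the factors
beyond `N₀` gives `|μ̂ m| ≤ e^{-C t² (m - N₀)} ≤ e^{C N₀ / 4} / (C t² m)` since `e^{-x} ≤ 1/x`.
With `m = 4^k` and `4^{k+1} = 4m` this is the claimed bound.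
-/

open Finset

noncomputable section

def charZ (t : ℝ) (k : ℤ) : ℂ :=
  Complex.exp ((-2 * (Real.pi : ℂ) * Complex.I) * (k : ℂ) * (t : ℂ))

lemma norm_charZ (t : ℝ) (k : ℤ) : ‖charZ t k‖ = 1 := by
  rw [charZ, Complex.norm_exp]
  simp [Complex.mul_re, Complex.mul_im]

lemma charZ_add (t : ℝ) (j k : ℤ) : charZ t (j + k) = charZ t j * charZ t k := by
  rw [charZ, charZ, charZ, ← Complex.exp_add]
  push_cast
  ring_nf

lemma charZ_zero (t : ℝ) : charZ t 0 = 1 := by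
  simp [charZ]

lemma fourierZ_eq_tsum_charZ (ν : ℤ → ℝ) (t : ℝ) :
    fourierZ ν t = ∑' k : ℤ, (ν k : ℂ) * charZ t k := rfl

lemma summable_norm_mul_charZ {ν : ℤ → ℝ} (hν : Summable ν) (t : ℝ) :
    Summable fun k : ℤ => ‖(ν k : ℂ) * charZ t k‖ := by
  simpa only [norm_mul, norm_charZ, mul_one, Complex.norm_real, Real.norm_eq_abs]
    using hν.abs

lemma HasSum.convolution_int {R : Type*} [NormedRing R] [CompleteSpace R] {f g : ℤ → R}
    {a b : R} (hf : Summable fun k => ‖f k‖) (hg : Summable fun k => ‖g k‖)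
    (ha : HasSum f a) (hb : HasSum g b) :
    HasSum (fun k : ℤ => ∑' j : ℤ, f j * g (k - j)) (a * b) := by
  have hprod : HasSum (fun p : ℤ × ℤ => f p.1 * g p.2) (a * b) :=
    ha.mul hb (summable_mul_of_summable_norm hf hg)
  let shear : ℤ × ℤ ≃ ℤ × ℤ :=
    ⟨fun p => (p.2, p.1 - p.2), fun p => (p.2 + p.1, p.1), fun p => by simp, fun p => by simp⟩
  have hshear := shear.hasSum_iff.mpr hprod
  exact hshear.prod_fiberwise fun k => (hshear.summable.prod_factor k).hasSum

lemma IsProbZ.summable_norm {ν : ℤ → ℝ} (hν : IsProbZ ν) : Summable fun k => ‖ν k‖ := by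
  simpa only [Real.norm_eq_abs, abs_of_nonneg (hν.1 _)] using hν.2.summable

lemma IsProbZ.convZ {ν₁ ν₂ : ℤ → ℝ} (h₁ : IsProbZ ν₁) (h₂ : IsProbZ ν₂) :
    IsProbZ (convZ ν₁ ν₂) := by
  refine ⟨fun k => tsum_nonneg fun j => mul_nonneg (h₁.1 j) (h₂.1 (k - j)), ?_⟩
  have hsum := h₁.2.convolution_int h₁.summable_norm h₂.summable_norm h₂.2
  rw [mul_one] at hsum
  exact hsum

lemma fourierZ_convZ {ν₁ ν₂ : ℤ → ℝ} (h₁ : Summable ν₁) (h₂ : Summable ν₂) (t : ℝ) :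
    fourierZ (convZ ν₁ ν₂) t = fourierZ ν₁ t * fourierZ ν₂ t := by
  have hf := summable_norm_mul_charZ h₁ t
  have hg := summable_norm_mul_charZ h₂ t
  have hconv := hf.of_norm.hasSum.convolution_int hf hg hg.of_norm.hasSum
  have hterm : ∀ k : ℤ,
      ∑' j : ℤ, (ν₁ j : ℂ) * charZ t j * ((ν₂ (k - j) : ℂ) * charZ t (k - j)) =
        (convZ ν₁ ν₂ k : ℂ) * charZ t k := by
    intro k
    have hsplit : ∀ j : ℤ, (ν₁ j : ℂ) * charZ t j * ((ν₂ (k - j) : ℂ) * charZ t (k - j)) =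
        ((ν₁ j * ν₂ (k - j) : ℝ) : ℂ) * charZ t k := by
      intro j
      rw [show k = j + (k - j) by ring, charZ_add, add_sub_cancel_left]
      push_cast
      ring
    rw [tsum_congr hsplit, tsum_mul_right, convZ, Complex.ofReal_tsum]
  exact ((funext hterm ▸ hconv).tsum_eq)

lemma norm_fourierZ_le_one {ν : ℤ → ℝ} (hν : IsProbZ ν) (t : ℝ) : ‖fourierZ ν t‖ ≤ 1 := by
  calc ‖fourierZ ν t‖ ≤ ∑' k : ℤ, ‖(ν k : ℂ) * charZ t k‖ :=
        norm_tsum_le_tsum_norm (summable_norm_mul_charZ hν.2.summable t)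
    _ = ∑' k : ℤ, ν k := by
        simp only [norm_mul, norm_charZ, mul_one, Complex.norm_of_nonneg (hν.1 _)]
    _ = 1 := hν.2.tsum_eq

section ConvProd

variable {ν : ℕ → ℤ → ℝ}

lemma isProbZ_convProd (hprob : ∀ i, 1 ≤ i → IsProbZ (ν i)) (n : ℕ) :
    IsProbZ (convProd ν n) := by
  induction n with
  | zero =>
    refine ⟨fun k => ?_, hasSum_ite_eq 0 1⟩
    simp only [convProd]
    split <;> norm_num
  | succ n ih => exact ih.convZ (hprob (n + 1) n.succ_pos)

lemma fourierZ_convProd (hprob : ∀ i, 1 ≤ i → IsProbZ (ν i)) (n : ℕ) (t : ℝ) :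
    fourierZ (convProd ν n) t = ∏ i ∈ range n, fourierZ (ν (i + 1)) t := by
  induction n with
  | zero =>
    rw [fourierZ_eq_tsum_charZ, tsum_eq_single 0 fun k hk => by simp [convProd, hk]]
    simp [convProd, charZ_zero]
  | succ n ih =>
    rw [convProd, fourierZ_convZ (isProbZ_convProd hprob n).2.summable
      (hprob (n + 1) n.succ_pos).2.summable, ih, prod_range_succ]

lemma norm_fourierZ_convProd_sub_le (hprob : ∀ i, 1 ≤ i → IsProbZ (ν i)) {m n : ℕ}
    (hmn : m ≤ n) (t : ℝ) :
    ‖fourierZ (convProd ν n) t - fourierZ (convProd ν m) t‖ ≤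
      2 * ‖fourierZ (convProd ν m) t‖ := by
  obtain ⟨d, rfl⟩ := Nat.exists_eq_add_of_le hmn
  have htail : ‖∏ i ∈ range d, fourierZ (ν (m + i + 1)) t‖ ≤ 1 := by
    rw [norm_prod]
    exact prod_le_one (fun _ _ => norm_nonneg _)
      fun i _ => norm_fourierZ_le_one (hprob _ (m + i).succ_pos) t
  have hfactor : fourierZ (convProd ν (m + d)) t - fourierZ (convProd ν m) t =
      fourierZ (convProd ν m) t * (∏ i ∈ range d, fourierZ (ν (m + i + 1)) t - 1) := by
    rw [fourierZ_convProd hprob, fourierZ_convProd hprob, prod_range_add]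
    ring
  rw [hfactor, norm_mul, mul_comm]
  gcongr
  calc _ ≤ ‖∏ i ∈ range d, fourierZ (ν (m + i + 1)) t‖ + ‖(1 : ℂ)‖ := norm_sub_le _ _
    _ ≤ 2 := by rw [norm_one]; linarith

end ConvProd

lemma norm_prod_range_le_pow_tsub {𝕜 : Type*} [NormedField 𝕜] {F : ℕ → 𝕜} {q : ℝ} {N : ℕ}
    (hle_one : ∀ i, ‖F i‖ ≤ 1) (hq : ∀ i, N ≤ i → ‖F i‖ ≤ q) (m : ℕ) :
    ‖∏ i ∈ range m, F i‖ ≤ q ^ (m - N) := by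
  induction m with
  | zero => simp
  | succ m ih =>
    rw [prod_range_succ, norm_mul]
    rcases lt_or_ge m N with hmN | hNm
    · rw [Nat.sub_eq_zero_of_le hmN.le] at ih
      rw [Nat.sub_eq_zero_of_le hmN, pow_zero]
      exact mul_le_one₀ (by simpa using ih) (norm_nonneg _) (hle_one m)
    · rw [Nat.sub_add_comm hNm, pow_succ]
      exact mul_le_mul ih (hq m hNm) (norm_nonneg _) ((norm_nonneg _).trans ih)

lemma norm_fourierZ_convProd_le_pow {ν : ℕ → ℤ → ℝ} (hprob : ∀ i, 1 ≤ i → IsProbZ (ν i))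
    {N₀ : ℕ} {t q : ℝ} (hdecay : ∀ n, N₀ < n → ‖fourierZ (ν n) t‖ ≤ q) (m : ℕ) :
    ‖fourierZ (convProd ν m) t‖ ≤ q ^ (m - N₀) := by
  rw [fourierZ_convProd hprob]
  exact norm_prod_range_le_pow_tsub (fun i => norm_fourierZ_le_one (hprob _ i.succ_pos) t)
    (fun i hi => hdecay _ (Nat.lt_succ_of_le hi)) m

lemma Real.exp_neg_le_inv {x : ℝ} (hx : 0 < x) : Real.exp (-x) ≤ x⁻¹ := by
  rw [Real.exp_neg]
  exact inv_anti₀ hx (by linarith [Real.add_one_le_exp x])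

lemma Real.exp_neg_pow_tsub_le {x : ℝ} (hx : 0 < x) (N : ℕ) {m : ℕ} (hm : 0 < m) :
    Real.exp (-x) ^ (m - N) ≤ Real.exp (x * N) / (x * m) := by
  have hcast : (m : ℝ) - N ≤ ((m - N : ℕ) : ℝ) := by
    rcases le_total N m with hNm | hmN
    · rw [Nat.cast_sub hNm]
    · rw [Nat.sub_eq_zero_of_le hmN, Nat.cast_zero, sub_nonpos]
      exact_mod_cast hmN
  calc Real.exp (-x) ^ (m - N) = Real.exp (-(x * (m - N : ℕ))) := by
        rw [← Real.exp_nat_mul]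
        ring_nf
    _ ≤ Real.exp (x * N + -(x * m)) := Real.exp_le_exp.mpr (by nlinarith)
    _ = Real.exp (x * N) * Real.exp (-(x * m)) := Real.exp_add _ _
    _ ≤ Real.exp (x * N) * (x * m)⁻¹ := by
        gcongr
        exact Real.exp_neg_le_inv (by positivity)
    _ = Real.exp (x * N) / (x * m) := (div_eq_mul_inv _ _).symm

end

theorem fourier_difference_decay_bound_general
    (ν : ℕ → ℤ → ℝ)
    (hprob : ∀ i, 1 ≤ i → IsProbZ (ν i))
    (C : ℝ) (hC : 0 < C) (N₀ : ℕ)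
    (hfour : ∀ n, N₀ < n → ∀ t ∈ Set.Ico (-(1 : ℝ)/2) (1/2),
      ‖fourierZ (ν n) t‖ ≤ Real.exp (-C * t ^ 2))
    (μ : ℕ → ℤ → ℝ) (hμ : μ = convProd ν) :
    ∃ C' : ℝ, 0 ≤ C' ∧ ∀ k n : ℕ, 4 ^ k ≤ n → n < 4 ^ (k + 1) →
      ∀ t ∈ Set.Ico (-(1 : ℝ)/2) (1/2), t ≠ 0 →
        ‖fourierZ (μ n) t - fourierZ (μ (4 ^ k)) t‖ ≤
          C' / (4 ^ (k + 1) * t ^ 2) := by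
  refine ⟨8 * Real.exp (C * N₀ / 4) / C, by positivity, ?_⟩
  rintro k n hkn - t ht ht0
  subst hμ
  have hCt : 0 < C * t ^ 2 := by positivity
  have ht_sq_le : t ^ 2 ≤ 1 / 4 := by nlinarith [ht.1, ht.2]
  have hdecay : ∀ n, N₀ < n → ‖fourierZ (ν n) t‖ ≤ Real.exp (-(C * t ^ 2)) :=
    fun n hn => neg_mul C (t ^ 2) ▸ hfour n hn t ht
  calc _ ≤ 2 * ‖fourierZ (convProd ν (4 ^ k)) t‖ := norm_fourierZ_convProd_sub_le hprob hkn t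
    _ ≤ 2 * (Real.exp (C * t ^ 2 * N₀) / (C * t ^ 2 * (4 ^ k : ℕ))) := by
        gcongr
        exact (norm_fourierZ_convProd_le_pow hprob hdecay _).trans
          (Real.exp_neg_pow_tsub_le hCt N₀ (by positivity))
    _ ≤ 2 * (Real.exp (C * N₀ / 4) / (C * t ^ 2 * (4 ^ k : ℕ))) := by
        gcongr
        nlinarith [show (0 : ℝ) ≤ C * N₀ by positivity]
    _ = 8 * Real.exp (C * N₀ / 4) / C / (4 ^ (k + 1) * t ^ 2) := by
        push_cast
        field_simp
        ring

/-- **Second estimate in the proof of Lemma 1.4.7(1).** Using the Gaussian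
Fourier decay, for `4^{k-1} ≤ n < 4^k` (written here as `4^k ≤ n < 4^{k+1}`) and
`t ≠ 0`, one has `|μ̂ₙ(t) - μ̂_{4^{k-1}}(t)| ≤ C'/(4^k t²)`. -/
theorem fourier_difference_decay_bound
    (ν : ℕ → ℤ → ℝ)
    (hprob : ∀ i, 1 ≤ i → IsProbZ (ν i))
    (haper : ∀ i, 1 ≤ i → StrictlyAperiodic (ν i))
    (hexp : ∀ i, 1 ≤ i → HasSum (fun k : ℤ => (k : ℝ) * ν i k) 0)
    (C : ℝ) (hC : 0 < C) (N₀ : ℕ) (hN₀ : 0 < N₀)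
    (hfour : ∀ n, N₀ < n → ∀ t ∈ Set.Ico (-(1 : ℝ)/2) (1/2),
      ‖fourierZ (ν n) t‖ ≤ Real.exp (-C * t ^ 2))
    (μ : ℕ → ℤ → ℝ) (hμ : μ = convProd ν) :
    ∃ C' : ℝ, 0 ≤ C' ∧ ∀ k n : ℕ, 4 ^ k ≤ n → n < 4 ^ (k + 1) →
      ∀ t ∈ Set.Ico (-(1 : ℝ)/2) (1/2), t ≠ 0 →
        ‖fourierZ (μ n) t - fourierZ (μ (4 ^ k)) t‖ ≤
          C' / (4 ^ (k + 1) * t ^ 2) :=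
  fourier_difference_decay_bound_general ν hprob C hC N₀ hfour μ hμ
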